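/- With R and I as above, the composition of the quotient map R → R/I with the ring homomorphism induced by s ↦ 1, t ↦ 1 lands in ℤ/2, and the image of any element Σᵢ εᵢ s^{nᵢ} t^{mᵢ} (with εᵢ = ±1) equals the parity of the number of summands; in particular if this parity is even, then the class of the element in R/I is either 0 or 1 + t. -/

import Mathlib

noncomputable section

abbrev R2 : Type := AddMonoidAlgebra ℤ (ℤ × ℤ)

def mono (n m : ℤ) : R2 := AddMonoidAlgebra.single (n, m) 1

def Igen : Set R2 :=
  {x | ∃ n : ℤ, x = mono n n - mono n 0} ∪
  {x | ∃ n m : ℤ, x = mono n m + mono (-n) (m - n)} ∪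
  {x | ∃ n m : ℤ, x = mono n m + mono m n} ∪
  {x | ∃ n m : ℤ, x = mono n m * (1 - mono 0 1) ^ 2}

def I : AddSubgroup R2 := AddSubgroup.closure Igen

abbrev A2 : Type := AddMonoidAlgebra (ZMod 2) (ZMod 2)

def tA (k : ZMod 2) : A2 := AddMonoidAlgebra.single k 1

def Jf (n m : ℤ) : ZMod 2 := ((n + n * m + m : ℤ) : ZMod 2)

def phi : R2 →ₗ[ℤ] A2 :=
  Finsupp.lsum ℤ (fun p : ℤ × ℤ => LinearMap.toSpanSingleton ℤ A2 (tA (Jf p.1 p.2))) ∘ₗ (AddMonoidAlgebra.coeffLinearEquiv ℤ).toLinearMap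

def epsA : A2 →ₐ[ZMod 2] ZMod 2 := (AddMonoidAlgebra.lift (ZMod 2) (ZMod 2) (ZMod 2)) 1

def ev1 : LaurentPolynomial ℤ →ₗ[ℤ] ℤ := Finsupp.lsum ℤ (fun _ : ℤ => (LinearMap.id : ℤ →ₗ[ℤ] ℤ)) ∘ₗ (AddMonoidAlgebra.coeffLinearEquiv ℤ).toLinearMap

def lder : LaurentPolynomial ℤ →ₗ[ℤ] LaurentPolynomial ℤ :=
  Finsupp.lsum ℤ (fun n : ℤ =>
    LinearMap.toSpanSingleton ℤ (LaurentPolynomial ℤ) ((n : ℤ) • LaurentPolynomial.T (n - 1))) ∘ₗ (AddMonoidAlgebra.coeffLinearEquiv ℤ).toLinearMap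

def ev2 : R2 →ₗ[ℤ] ZMod 2 :=
  Finsupp.lsum ℤ (fun _ : ℤ × ℤ => LinearMap.toSpanSingleton ℤ (ZMod 2) 1) ∘ₗ (AddMonoidAlgebra.coeffLinearEquiv ℤ).toLinearMap

/-! In the additive group `R2 ⧸ I` the symmetry relations give `2 • monoClass n n = 0`, and the
generator `s^n t^m (1 - t)²` makes `m ↦ monoClass n m` an arithmetic progression; together they
show that every class is killed by `2` and depends only on parities, so it is `monoClass 0 0 = [1]`
or `monoClass 0 1 = [t]`. A signed sum of `k` monomials therefore has class `a • [1] + b • [t]`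
with `a + b = k`, which for even `k` is `0` or `[1] + [t]`. The map `ev2` is the coefficient sum
mod 2: it is `1` on monomials and `0` on every generator of `I`. -/

theorem eq_add_zsmul_of_forall_sub_eq_sub {G : Type*} [AddCommGroup G] {u : ℤ → G}
    (h : ∀ m, u (m + 2) - u (m + 1) = u (m + 1) - u m) (m : ℤ) :
    u m = u 0 + m • (u 1 - u 0) := by
  have step : ∀ m, u (m + 1) - u m = u 1 - u 0 := by
    intro m
    induction m using Int.induction_on with
    | zero => simp
    | succ k ih => rw [add_assoc, one_add_one_eq_two, h, ih]
    | pred k ih =>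
      rw [← ih, ← h, show -(k : ℤ) - 1 + 2 = -k + 1 by ring, sub_add_cancel]
  induction m using Int.induction_on with
  | zero => simp
  | succ k ih => rw [add_zsmul, one_zsmul, ← add_assoc, ← ih, ← step k, add_sub_cancel]
  | pred k ih =>
    rw [sub_zsmul, one_zsmul, ← sub_eq_add_neg, ← add_sub_assoc, ← ih, ← step (-(k : ℤ) - 1),
      sub_add_cancel, sub_sub_cancel]

theorem zsmul_eq_zero_or_self_of_two_nsmul_eq_zero {G : Type*} [AddGroup G] {c : G}
    (hc : 2 • c = 0) (z : ℤ) : z • c = 0 ∨ z • c = c := by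
  have hcc : c + c = 0 := by rwa [two_nsmul] at hc
  rcases Int.even_or_odd' z with ⟨j, rfl | rfl⟩
  · left; rw [mul_zsmul', two_zsmul, hcc, zsmul_zero]
  · right; rw [add_zsmul, mul_zsmul', two_zsmul, hcc, zsmul_zero, zero_add, one_zsmul]

theorem Fintype.sum_eq_zero_or_eq_add_of_forall_eq_or_eq {G ι : Type*} [AddCommGroup G] [Fintype ι]
    {a b : G} (ha : 2 • a = 0) (hb : 2 • b = 0) (f : ι → G) (hf : ∀ i, f i = a ∨ f i = b)
    (hι : Even (Fintype.card ι)) : ∑ i, f i = 0 ∨ ∑ i, f i = a + b := by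
  have hshift : ∀ i, f i + a ∈ AddSubgroup.zmultiples (a + b) := by
    intro i
    rcases hf i with hi | hi <;> rw [hi]
    · rw [← two_nsmul, ha]; exact zero_mem _
    · rw [add_comm]; exact AddSubgroup.mem_zmultiples _
  have hcard : Fintype.card ι • a = 0 := by
    obtain ⟨j, hj⟩ := hι
    rw [hj, ← two_mul, mul_nsmul, ha, nsmul_zero]
  obtain ⟨z, hz⟩ := AddSubgroup.sum_mem _ (fun i _ => hshift i)
  rw [Finset.sum_add_distrib, Finset.sum_const, Finset.card_univ, hcard, add_zero] at hz
  rw [← hz]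
  refine zsmul_eq_zero_or_self_of_two_nsmul_eq_zero ?_ z
  rw [nsmul_add, ha, hb, add_zero]

theorem mono_mul_mono (a b c d : ℤ) : mono a b * mono c d = mono (a + c) (b + d) := by
  rw [mono, mono, AddMonoidAlgebra.single_mul_single, mul_one, Prod.mk_add_mk, mono]

theorem one_eq_mono : (1 : R2) = mono 0 0 := rfl

theorem mono_mul_one_sub_sq (n m : ℤ) :
    mono n m * (1 - mono 0 1) ^ 2 = mono n m - 2 • mono n (m + 1) + mono n (m + 2) := by
  have h : mono n m * (1 - mono 0 1) ^ 2 =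
      mono n m - 2 * (mono n m * mono 0 1) + mono n m * mono 0 1 * mono 0 1 := by ring
  rw [h, mono_mul_mono, mono_mul_mono, add_zero, add_zero, add_assoc, one_add_one_eq_two,
    two_mul, two_nsmul]

theorem ev2_mono (n m : ℤ) : ev2 (mono n m) = 1 := by
  simp [ev2, mono]

theorem ev2_eq_zero_of_mem_I {x : R2} (hx : x ∈ I) : ev2 x = 0 := by
  suffices I ≤ (LinearMap.ker ev2).toAddSubgroup from this hx
  refine (AddSubgroup.closure_le _).mpr ?_
  rintro y (((⟨n, rfl⟩ | ⟨n, m, rfl⟩) | ⟨n, m, rfl⟩) | ⟨n, m, rfl⟩) <;>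
    simp only [SetLike.mem_coe, Submodule.mem_toAddSubgroup, LinearMap.mem_ker, map_add,
      map_sub, map_nsmul, mono_mul_one_sub_sq, ev2_mono] <;> decide

theorem ev2_sum_zsmul_mono {k : ℕ} (ε n m : Fin k → ℤ) (hε : ∀ i, ε i = 1 ∨ ε i = -1) :
    ev2 (∑ i, ε i • mono (n i) (m i)) = k := by
  have hterm : ∀ i, ev2 (ε i • mono (n i) (m i)) = 1 := fun i => by
    rcases hε i with h | h <;> rw [map_zsmul, ev2_mono, h] <;> decide
  simp only [map_sum, hterm, Finset.sum_const, Finset.card_univ, Fintype.card_fin, nsmul_eq_mul,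
    mul_one]

def monoClass (n m : ℤ) : R2 ⧸ I := QuotientAddGroup.mk' I (mono n m)

theorem mk'_eq_zero_of_mem_Igen {x : R2} (hx : x ∈ Igen) : QuotientAddGroup.mk' I x = 0 :=
  (QuotientAddGroup.eq_zero_iff x).mpr (AddSubgroup.subset_closure hx)

theorem monoClass_diag (n : ℤ) : monoClass n n = monoClass n 0 :=
  sub_eq_zero.mp <| by
    rw [monoClass, monoClass, ← map_sub]
    exact mk'_eq_zero_of_mem_Igen (Or.inl (Or.inl (Or.inl ⟨n, rfl⟩)))

theorem monoClass_add_monoClass_swap (n m : ℤ) : monoClass n m + monoClass m n = 0 := by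
  rw [monoClass, monoClass, ← map_add]
  exact mk'_eq_zero_of_mem_Igen (Or.inl (Or.inr ⟨n, m, rfl⟩))

theorem monoClass_second_diff (n m : ℤ) :
    monoClass n (m + 2) - monoClass n (m + 1) = monoClass n (m + 1) - monoClass n m := by
  have h := mk'_eq_zero_of_mem_Igen (Or.inr ⟨n, m, rfl⟩)
  rw [mono_mul_one_sub_sq, map_add, map_sub, map_nsmul] at h
  rw [← sub_eq_zero, ← h, monoClass, monoClass, monoClass]
  abel

theorem two_nsmul_monoClass_zero (n : ℤ) : 2 • monoClass n 0 = 0 := by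
  rw [← monoClass_diag, two_nsmul, monoClass_add_monoClass_swap]

theorem two_nsmul_monoClass_of_one {n : ℤ} (h : 2 • monoClass n 1 = 0) (m : ℤ) :
    2 • monoClass n m = 0 := by
  rw [eq_add_zsmul_of_forall_sub_eq_sub (monoClass_second_diff n) m, nsmul_add,
    two_nsmul_monoClass_zero, zero_add, smul_comm, nsmul_sub, h, two_nsmul_monoClass_zero,
    sub_zero, zsmul_zero]

theorem two_nsmul_monoClass (n m : ℤ) : 2 • monoClass n m = 0 := by
  refine two_nsmul_monoClass_of_one ?_ m
  rw [eq_neg_of_add_eq_zero_left (monoClass_add_monoClass_swap n 1), neg_nsmul,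
    two_nsmul_monoClass_of_one (by rw [monoClass_diag, two_nsmul_monoClass_zero]) n, neg_zero]

theorem neg_monoClass (n m : ℤ) : -monoClass n m = monoClass n m :=
  neg_eq_of_add_eq_zero_left (by rw [← two_nsmul, two_nsmul_monoClass])

theorem monoClass_comm (n m : ℤ) : monoClass m n = monoClass n m := by
  rw [← neg_monoClass n m, eq_neg_of_add_eq_zero_left (monoClass_add_monoClass_swap m n)]

theorem monoClass_emod_two (n m : ℤ) : monoClass n (m % 2) = monoClass n m := by
  have hper : Function.Periodic (monoClass n) 2 := fun m => by
    have h := monoClass_second_diff n m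
    rw [sub_eq_sub_iff_add_eq_add, ← two_nsmul, two_nsmul_monoClass] at h
    rw [eq_neg_of_add_eq_zero_left h, neg_monoClass]
  rw [Int.emod_def, mul_comm, ← smul_eq_mul, hper.sub_zsmul_eq]

theorem monoClass_eq_or_eq (n m : ℤ) :
    monoClass n m = monoClass 0 0 ∨ monoClass n m = monoClass 0 1 := by
  rw [← monoClass_emod_two n m]
  rcases Int.emod_two_eq_zero_or_one m with hm | hm <;> rw [hm]
  · rw [← monoClass_comm, ← monoClass_emod_two 0 n]
    rcases Int.emod_two_eq_zero_or_one n with hn | hn <;> rw [hn] <;> simp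
  · right
    rw [← monoClass_comm, ← monoClass_emod_two 1 n]
    rcases Int.emod_two_eq_zero_or_one n with hn | hn <;> rw [hn]
    · exact monoClass_comm 0 1
    · rw [monoClass_diag, monoClass_comm]

theorem stmt19 :
    (∀ x ∈ I, ev2 x = 0) ∧
    (∀ (k : ℕ) (ε : Fin k → ℤ) (n m : Fin k → ℤ), (∀ i, ε i = 1 ∨ ε i = -1) →
      ev2 (∑ i, ε i • mono (n i) (m i)) = (k : ZMod 2) ∧
      (Even k →
        (∑ i, ε i • mono (n i) (m i)) ∈ I ∨
        (∑ i, ε i • mono (n i) (m i)) - (1 + mono 0 1) ∈ I)) := by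
  refine ⟨fun x hx => ev2_eq_zero_of_mem_I hx,
    fun k ε n m hε => ⟨ev2_sum_zsmul_mono ε n m hε, fun hk => ?_⟩⟩
  have hclass : QuotientAddGroup.mk' I (∑ i, ε i • mono (n i) (m i)) =
      ∑ i, monoClass (n i) (m i) := by
    rw [map_sum]
    refine Finset.sum_congr rfl fun i _ => ?_
    rcases hε i with h | h <;> rw [map_zsmul, h, ← monoClass]
    · exact one_zsmul _
    · rw [neg_one_zsmul, neg_monoClass]
  rcases Fintype.sum_eq_zero_or_eq_add_of_forall_eq_or_eq (two_nsmul_monoClass 0 0)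
      (two_nsmul_monoClass 0 1) _ (fun i => monoClass_eq_or_eq (n i) (m i))
      (by rwa [Fintype.card_fin]) with h | h
  · left
    rwa [← hclass, QuotientAddGroup.mk'_apply, QuotientAddGroup.eq_zero_iff] at h
  · right
    rw [← QuotientAddGroup.eq_zero_iff, ← QuotientAddGroup.mk'_apply, map_sub, hclass, h,
      one_eq_mono, map_add]
    exact sub_self _
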